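/- arXiv:1002.0639 — 3 statements merged into one kernel-verified Lean document; each statement's English description precedes it below -/
import Mathlib

section
/- If a rational function r maps the unit circle 𝕋 into itself and has no poles in the open unit disc 𝔻, then r is a finite Blaschke product whose order equals the number of zeros of r in 𝔻 counted with multiplicity. -/
/-!
Divide `p / q` by the Blaschke product `B` built from the zeros of `p` in the disc. The quotient
is holomorphic and zero-free on a neighbourhood of the closed disc, and unimodular on the circle
because `B` is. The maximum modulus principle, applied to it and to its reciprocal, shows that it
has modulus one on the whole disc, so it is a unimodular constant.
-/

open Complex Real Set MeasureTheory Metric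

noncomputable section

/-- The unit circle `𝕋 = {z ∈ ℂ : |z| = 1}`. -/
def unitCircleSet : Set ℂ := {z : ℂ | ‖z‖ = 1}

/-- An arc: a closed, connected, proper, nonempty subset of the unit circle. -/
def IsArc (A : Set ℂ) : Prop :=
  A ⊆ unitCircleSet ∧ IsClosed A ∧ IsConnected A ∧ A ≠ unitCircleSet ∧ A.Nonempty

/-- `b` is a finite Blaschke product of order `n` (as a function on the closed unit disc):
`b(z) = λ ∏_{j} (z - a_j)/(1 - conj(a_j) z)` with `|λ| = 1` and `a_j ∈ 𝔻`. -/
def IsBlaschke (n : ℕ) (b : ℂ → ℂ) : Prop :=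
  ∃ (lam : ℂ) (a : Fin n → ℂ), ‖lam‖ = 1 ∧ (∀ j, ‖a j‖ < 1) ∧
    ∀ z : ℂ, ‖z‖ ≤ 1 →
      b z = lam * ∏ j, (z - a j) / (1 - (starRingEnd ℂ) (a j) * z)

open ComplexConjugate Polynomial

theorem Multiset.exists_fin_map_univ_eq {α : Type*} (s : Multiset α) :
    ∃ a : Fin (Multiset.card s) → α, Finset.univ.val.map a = s := by
  rw [← Multiset.coe_toList s]
  exact ⟨s.toList.get, (Fin.univ_val_map _).trans (congrArg _ (List.ofFn_get _))⟩

section FactorRoots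

variable {R : Type*} [CommRing R] [IsDomain R] {p : R[X]}

theorem Polynomial.exists_eq_prod_roots_filter_mul (hp : p ≠ 0) (P : R → Prop)
    [DecidablePred P] :
    ∃ g : R[X], p = ((p.roots.filter P).map fun a => X - C a).prod * g ∧
      ∀ z, P z → ¬ g.IsRoot z := by
  obtain ⟨g, hg⟩ := (Multiset.prod_X_sub_C_dvd_iff_le_roots hp _).2 (p.roots.filter_le P)
  refine ⟨g, hg, fun z hz hgz => ?_⟩
  have hg0 : g ≠ 0 := by rintro rfl; exact hp (by simpa using hg)
  have hroots : p.roots = p.roots.filter P + g.roots := by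
    conv_lhs => rw [hg, roots_mul (hg ▸ hp), roots_multiset_prod_X_sub_C]
  have hfilter : g.roots.filter P = 0 := by
    have h := congrArg (Multiset.filter P) hroots
    rwa [Multiset.filter_add, Multiset.filter_filter,
      Multiset.filter_congr fun _ _ => and_self_iff, left_eq_add] at h
  exact Multiset.notMem_zero z (hfilter ▸ Multiset.mem_filter.2 ⟨(mem_roots hg0).2 hgz, hz⟩)

theorem Polynomial.exists_fin_eq_prod_X_sub_C_mul (hp : p ≠ 0) (P : R → Prop)
    [DecidablePred P] :
    ∃ (a : Fin (Multiset.card (p.roots.filter P)) → R) (g : R[X]), (∀ j, P (a j)) ∧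
      (∀ z, P z → ¬ g.IsRoot z) ∧ p = (∏ j, (X - C (a j))) * g := by
  obtain ⟨g, hpg, hg⟩ := p.exists_eq_prod_roots_filter_mul hp P
  obtain ⟨a, ha⟩ := (p.roots.filter P).exists_fin_map_univ_eq
  refine ⟨a, g, fun j => ?_, hg, ?_⟩
  · exact Multiset.of_mem_filter (ha ▸ Multiset.mem_map_of_mem a (Finset.mem_univ j))
  · rwa [← ha, Multiset.map_map, ← Finset.prod_eq_multiset_prod] at hpg

end FactorRoots

section MaximumModulus

variable {E : Type*} [NormedAddCommGroup E] [NormedSpace ℂ E] [Nontrivial E]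
  {f : E → ℂ} {c : E} {r : ℝ}

theorem Complex.norm_eq_one_of_norm_eq_one_on_sphere (hr : r ≠ 0)
    (hf : DiffContOnCl ℂ f (ball c r)) (hf₀ : ∀ z ∈ closedBall c r, f z ≠ 0)
    (hf₁ : ∀ z ∈ sphere c r, ‖f z‖ = 1) {z : E} (hz : z ∈ closedBall c r) : ‖f z‖ = 1 := by
  rw [← closure_ball c hr] at hz hf₀
  have hfrontier : ∀ g : E → ℂ, (∀ w ∈ sphere c r, ‖g w‖ = 1) →
      ∀ w ∈ frontier (ball c r), ‖g w‖ ≤ 1 := by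
    intro g hg w hw
    rw [frontier_ball c hr] at hw
    exact (hg w hw).le
  have hle : ‖f z‖ ≤ 1 :=
    norm_le_of_forall_mem_frontier_norm_le isBounded_ball hf (hfrontier f hf₁) hz
  -- the minimum modulus principle, as the maximum modulus principle for `f⁻¹`
  have hinv_le : ‖f⁻¹ z‖ ≤ 1 :=
    norm_le_of_forall_mem_frontier_norm_le isBounded_ball (hf.inv hf₀)
      (hfrontier _ fun w hw => by simp [hf₁ w hw]) hz
  rw [Pi.inv_apply, norm_inv, inv_le_one₀ (norm_pos_iff.2 (hf₀ z hz))] at hinv_le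
  exact le_antisymm hle hinv_le

theorem Complex.exists_eqOn_const_of_norm_eq_one_on_sphere (hr : 0 < r)
    (hf : DiffContOnCl ℂ f (ball c r)) (hf₀ : ∀ z ∈ closedBall c r, f z ≠ 0)
    (hf₁ : ∀ z ∈ sphere c r, ‖f z‖ = 1) :
    ∃ lam : ℂ, ‖lam‖ = 1 ∧ EqOn f (fun _ => lam) (closedBall c r) := by
  have hnorm : ∀ z ∈ closedBall c r, ‖f z‖ = 1 := fun _ =>
    norm_eq_one_of_norm_eq_one_on_sphere hr.ne' hf hf₀ hf₁
  have hc : c ∈ closedBall c r := mem_closedBall_self hr.le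
  refine ⟨f c, hnorm c hc, eqOn_closedBall_of_isMaxOn_norm hf fun z hz => ?_⟩
  simp [hnorm z (ball_subset_closedBall hz), hnorm c hc]

end MaximumModulus

theorem Complex.one_sub_conj_mul_ne_zero {a z : ℂ} (ha : ‖a‖ < 1) (hz : ‖z‖ ≤ 1) :
    1 - conj a * z ≠ 0 := by
  have hlt : ‖conj a * z‖ < 1 := by
    rw [norm_mul, norm_conj]
    nlinarith [norm_nonneg a, norm_nonneg z]
  rw [sub_ne_zero]
  rintro h
  simp [← h] at hlt

theorem Complex.norm_sub_div_one_sub_conj_mul {a z : ℂ} (hz : ‖z‖ = 1) (hza : z ≠ a) :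
    ‖(z - a) / (1 - conj a * z)‖ = 1 := by
  have h : 1 - conj a * z = z * conj (z - a) := by
    rw [map_sub, mul_sub, mul_conj, normSq_eq_norm_sq, hz]
    push_cast
    ring
  rw [h, norm_div, norm_mul, norm_conj, hz, one_mul,
    div_self (norm_ne_zero_iff.2 (sub_ne_zero.2 hza))]

theorem isBlaschke_of_eqOn_mul_prod {n : ℕ} {F f : ℂ → ℂ} {a : Fin n → ℂ}
    (ha : ∀ j, ‖a j‖ < 1) (hf : DiffContOnCl ℂ f (ball 0 1))
    (hf₀ : ∀ z ∈ closedBall 0 1, f z ≠ 0) (hF : ∀ z ∈ sphere 0 1, ‖F z‖ = 1)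
    (hFf : ∀ z ∈ closedBall 0 1, F z = f z * ∏ j, (z - a j) / (1 - conj (a j) * z)) :
    IsBlaschke n F := by
  have hf₁ : ∀ z ∈ sphere 0 1, ‖f z‖ = 1 := by
    intro z hz
    have hz₁ : ‖z‖ = 1 := mem_sphere_zero_iff_norm.1 hz
    have hB : ∀ j, ‖(z - a j) / (1 - conj (a j) * z)‖ = 1 := fun j =>
      norm_sub_div_one_sub_conj_mul hz₁ (by rintro rfl; exact (ha j).ne hz₁)
    rw [← hF z hz, hFf z (sphere_subset_closedBall hz), norm_mul, norm_prod,
      Finset.prod_eq_one fun j _ => hB j, mul_one]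
  obtain ⟨lam, hlam, hf_const⟩ := exists_eqOn_const_of_norm_eq_one_on_sphere one_pos hf hf₀ hf₁
  refine ⟨lam, a, hlam, ha, fun z hz => ?_⟩
  rw [← mem_closedBall_zero_iff] at hz
  rw [hFf z hz, hf_const hz]

theorem isBlaschke_eval_div_eval_of_eq_prod_mul {n : ℕ} {p q g : ℂ[X]} {a : Fin n → ℂ}
    (ha : ∀ j, ‖a j‖ < 1) (hpg : p = (∏ j, (X - C (a j))) * g)
    (hg : ∀ z ∈ closedBall 0 1, g.eval z ≠ 0) (hq : ∀ z ∈ closedBall 0 1, q.eval z ≠ 0)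
    (hmap : ∀ z ∈ sphere 0 1, ‖p.eval z / q.eval z‖ = 1) :
    IsBlaschke n fun z => p.eval z / q.eval z := by
  have hD : ∀ z ∈ closedBall (0 : ℂ) 1, ∏ j, (1 - conj (a j) * z) ≠ 0 := fun z hz =>
    Finset.prod_ne_zero_iff.2 fun j _ =>
      one_sub_conj_mul_ne_zero (ha j) (mem_closedBall_zero_iff.1 hz)
  -- `p / q` is `∏ j, (z - a j) / (1 - conj (a j) * z)` times the pole- and zero-free `h / q`
  set h := g * ∏ j, (1 - C (conj (a j)) * X) with h_def
  have h_eval : ∀ z, h.eval z = g.eval z * ∏ j, (1 - conj (a j) * z) := fun z => by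
    simp [h_def, eval_prod]
  refine isBlaschke_of_eqOn_mul_prod (f := fun z => h.eval z / q.eval z) ha ?_ ?_ hmap ?_
  · refine DifferentiableOn.diffContOnCl ?_
    rw [closure_ball _ one_ne_zero]
    exact (Polynomial.differentiableOn _).div (Polynomial.differentiableOn _) hq
  · intro z hz
    rw [h_eval]
    exact div_ne_zero (mul_ne_zero (hg z hz) (hD z hz)) (hq z hz)
  · intro z hz
    have hp_eval : p.eval z = (∏ j, (z - a j)) * g.eval z := by simp [hpg, eval_prod]
    have hqz := hq z hz
    have hDz := hD z hz
    rw [hp_eval, h_eval, Finset.prod_div_distrib]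
    generalize ∏ j, (1 - conj (a j) * z) = D at hDz ⊢
    field_simp

open scoped Classical in
theorem rational_isBlaschke_general (p q : Polynomial ℂ)
    (hpole : ∀ z : ℂ, ‖z‖ < 1 → q.eval z ≠ 0)
    (hmap : ∀ z : ℂ, ‖z‖ = 1 → ‖p.eval z / q.eval z‖ = 1) :
    IsBlaschke (Multiset.card (p.roots.filter (fun z => ‖z‖ < 1)))
      (fun z => p.eval z / q.eval z) := by
  have hpq : ∀ z : ℂ, ‖z‖ = 1 → p.eval z ≠ 0 ∧ q.eval z ≠ 0 := by
    intro z hz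
    have := hmap z hz
    constructor <;> rintro h <;> simp [h] at this
  have hp : p ≠ 0 := by rintro rfl; simpa using hpq 1 (by simp)
  obtain ⟨a, g, ha, hg, hpg⟩ := p.exists_fin_eq_prod_X_sub_C_mul hp fun z => ‖z‖ < 1
  refine isBlaschke_eval_div_eval_of_eq_prod_mul ha hpg (fun z hz => ?_) (fun z hz => ?_)
    fun z hz => hmap z (mem_sphere_zero_iff_norm.1 hz)
  · rcases (mem_closedBall_zero_iff.1 hz).lt_or_eq with hz | hz
    · exact hg z hz
    · intro hgz
      exact (hpq z hz).1 (by rw [hpg, eval_mul, hgz, mul_zero])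
  · rcases (mem_closedBall_zero_iff.1 hz).lt_or_eq with hz | hz
    exacts [hpole z hz, (hpq z hz).2]

open scoped Classical in
/-- A rational function mapping the unit circle into itself with no poles in the open unit
disc is a finite Blaschke product whose order is the number of its zeros in the disc,
counted with multiplicity. -/
theorem rational_isBlaschke (p q : Polynomial ℂ) (hq : q ≠ 0) (hcop : IsCoprime p q)
    (hpole : ∀ z : ℂ, ‖z‖ < 1 → q.eval z ≠ 0)
    (hmap : ∀ z : ℂ, ‖z‖ = 1 → ‖p.eval z / q.eval z‖ = 1) :
    IsBlaschke (Multiset.card (p.roots.filter (fun z => ‖z‖ < 1)))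
      (fun z => p.eval z / q.eval z) :=
  rational_isBlaschke_general p q hpole hmap
end
end

section
/- If q is a complex polynomial with no zeros in the open unit disc 𝔻 such that the rational function 1/q maps the unit circle 𝕋 into itself, then q is constant (of modulus 1). -/
open Complex Real Set MeasureTheory Metric

noncomputable section

/-! The maximum modulus principle applied to `q` and to `1 / q` pins `‖q‖ = 1` on the whole
closed disc, so `‖q‖` has a local maximum at `0` and the polynomial `q` is constant. -/

open Topology

theorem Complex.norm_eq_one_of_forall_mem_frontier_norm_eq_one
    {E : Type*} [NormedAddCommGroup E] [NormedSpace ℂ E] [Nontrivial E] {f : E → ℂ} {U : Set E}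
    (hU : Bornology.IsBounded U) (hd : DiffContOnCl ℂ f U) (hf₀ : ∀ z ∈ closure U, f z ≠ 0)
    (hf₁ : ∀ z ∈ frontier U, ‖f z‖ = 1) {z : E} (hz : z ∈ closure U) : ‖f z‖ = 1 := by
  have hle : ‖f z‖ ≤ 1 :=
    norm_le_of_forall_mem_frontier_norm_le hU hd (fun w hw => (hf₁ w hw).le) hz
  have hinv_le : ‖(f z)⁻¹‖ ≤ 1 :=
    norm_le_of_forall_mem_frontier_norm_le hU (hd.inv hf₀)
      (fun w hw => by rw [Pi.inv_apply, norm_inv, hf₁ w hw, inv_one]) hz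
  rw [norm_inv, inv_le_one₀ (norm_pos_iff.mpr (hf₀ z hz))] at hinv_le
  exact le_antisymm hle hinv_le

theorem Polynomial.eq_C_of_isLocalMax_norm {q : Polynomial ℂ} {c : ℂ}
    (h : IsLocalMax (fun z => ‖q.eval z‖) c) : q = Polynomial.C (q.eval c) := by
  have hev : ∀ᶠ z in 𝓝 c, q.eval z = q.eval c :=
    eventually_eq_of_isLocalMax_norm (Filter.Eventually.of_forall fun z => q.differentiableAt) h
  refine Polynomial.eq_of_infinite_eval_eq _ _ (infinite_of_mem_nhds c ?_)
  exact hev.mono fun z hz => by rwa [Polynomial.eval_C]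

/-- If `q` is a polynomial with no zeros in the open unit disc such that `1/q` maps the
unit circle into itself, then `q` is a constant of modulus `1`. -/
theorem polynomial_const_of_inv_maps_circle (q : Polynomial ℂ)
    (h0 : ∀ z : ℂ, ‖z‖ < 1 → q.eval z ≠ 0)
    (hmap : ∀ z : ℂ, ‖z‖ = 1 → ‖1 / q.eval z‖ = 1) :
    ∃ c : ℂ, ‖c‖ = 1 ∧ q = Polynomial.C c := by
  have hsphere : ∀ z ∈ sphere (0 : ℂ) 1, ‖q.eval z‖ = 1 := fun z hz => by
    simpa using hmap z (mem_sphere_zero_iff_norm.mp hz)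
  have hne : ∀ z ∈ closedBall (0 : ℂ) 1, q.eval z ≠ 0 := fun z hz => by
    rcases (mem_closedBall_zero_iff.mp hz).lt_or_eq with hlt | heq
    · exact h0 z hlt
    · have := hsphere z (mem_sphere_zero_iff_norm.mpr heq)
      exact norm_ne_zero_iff.mp (this.trans_ne one_ne_zero)
  have hone : ∀ z ∈ closedBall (0 : ℂ) 1, ‖q.eval z‖ = 1 := by
    rw [← closure_ball 0 one_ne_zero] at hne ⊢
    refine fun z hz => norm_eq_one_of_forall_mem_frontier_norm_eq_one
      (isBounded_ball (x := (0 : ℂ))) q.differentiable.diffContOnCl hne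
      (fun w hw => hsphere w ?_) hz
    rwa [frontier_ball 0 one_ne_zero] at hw
  have h0mem : (0 : ℂ) ∈ closedBall (0 : ℂ) 1 := mem_closedBall_self zero_le_one
  have hmax : IsLocalMax (fun z => ‖q.eval z‖) 0 :=
    Filter.mem_of_superset (closedBall_mem_nhds 0 one_pos) fun z hz =>
      (hone z hz).trans (hone 0 h0mem).symm |>.le
  exact ⟨q.eval 0, hone 0 h0mem, Polynomial.eq_C_of_isLocalMax_norm hmax⟩
end
end

section
/- A finite Blaschke product b has order n if and only if the set U_b = {z ∈ 𝕋 : Im b(z) ≥ 0} is a disjoint union of exactly n arcs (where for n = 0, i.e. b a unimodular constant, U_b is either all of 𝕋 or the empty set, each counted as a 'union of 0 arcs'). -/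
open Complex Real Set MeasureTheory Metric

noncomputable section

/-- `E` is a disjoint union of exactly `n` arcs (with `𝕋` and `∅` counted as
disjoint unions of `0` arcs). -/
def IsDisjointUnionOfArcs (n : ℕ) (E : Set ℂ) : Prop :=
  (n = 0 ∧ (E = ∅ ∨ E = unitCircleSet)) ∨
    ∃ A : Fin n → Set ℂ, (∀ j, IsArc (A j)) ∧ Pairwise (Function.onFun Disjoint A) ∧ E = ⋃ j, A j

/-!
On the circle, `b (e^{iθ}) = e^{iψ(θ)}` with the continuous lift
`ψ(θ) = arg λ + ∑ⱼ (θ - 2 arg (1 - conj aⱼ e^{iθ}))`. Each summand has derivative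
`Re ((1 + u) / (1 - u)) = (1 - |u|²) / |1 - u|² > 0` for `u = conj aⱼ e^{iθ}`, so for `n ≥ 1`
the lift is an increasing homeomorphism of `ℝ` with `ψ(θ + 2π) = ψ(θ) + 2πn`. Hence `Im b ≥ 0`
exactly where `ψ(θ) ∈ [2πk, 2πk + π]`, and one period of `θ` meets `n` of these intervals, giving
`n` disjoint arcs. Conversely the number of arcs is determined by the set: each arc of one
decomposition is connected, so it lies in a single arc of any other.
-/

open Function Filter ComplexConjugate

theorem IsPreconnected.exists_subset_of_subset_iUnion {X ι : Type*} [TopologicalSpace X]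
    [Finite ι] {K : Set X} {B : ι → Set X} (hK : IsPreconnected K) (hKne : K.Nonempty)
    (hB : ∀ i, IsClosed (B i)) (hBd : Pairwise (Disjoint on B)) (hKB : K ⊆ ⋃ i, B i) :
    ∃ i, K ⊆ B i := by
  obtain ⟨x, hxK⟩ := hKne
  obtain ⟨i, hxi⟩ := mem_iUnion.1 (hKB hxK)
  set R := ⋃ j ∈ ({i}ᶜ : Set ι), B j
  have hR : IsClosed R := (Set.toFinite _).isClosed_biUnion fun j _ => hB j
  have hcover : K ⊆ B i ∪ R := by
    intro y hy
    obtain ⟨j, hyj⟩ := mem_iUnion.1 (hKB hy)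
    by_cases hji : j = i
    · exact Or.inl (hji ▸ hyj)
    · exact Or.inr (mem_biUnion hji hyj)
  have hdisj : Disjoint (B i) R :=
    disjoint_iUnion₂_right.2 fun j hji => hBd (Ne.symm hji)
  refine ⟨i, (isPreconnected_iff_subset_of_disjoint_closed.1 hK _ _ (hB i) hR hcover
    (by rw [hdisj.inter_eq, inter_empty])).resolve_right fun hKR => ?_⟩
  exact disjoint_left.1 hdisj hxi (hKR hxK)

theorem exists_forall_subset_of_iUnion_subset_iUnion {X ι κ : Type*} [TopologicalSpace X]
    [Finite κ] {A : ι → Set X} {B : κ → Set X} (hA : ∀ i, IsPreconnected (A i))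
    (hAne : ∀ i, (A i).Nonempty) (hB : ∀ k, IsClosed (B k)) (hBd : Pairwise (Disjoint on B))
    (hAB : ⋃ i, A i ⊆ ⋃ k, B k) : ∃ f : ι → κ, ∀ i, A i ⊆ B (f i) := by
  choose f hf using fun i =>
    (hA i).exists_subset_of_subset_iUnion (hAne i) hB hBd ((subset_iUnion A i).trans hAB)
  exact ⟨f, hf⟩

theorem Nat.card_eq_of_iUnion_eq_iUnion {X ι κ : Type*} [TopologicalSpace X] [Finite ι]
    [Finite κ] {A : ι → Set X} {B : κ → Set X} (hAc : ∀ i, IsClosed (A i))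
    (hA : ∀ i, IsPreconnected (A i)) (hAne : ∀ i, (A i).Nonempty)
    (hAd : Pairwise (Disjoint on A)) (hBc : ∀ k, IsClosed (B k))
    (hB : ∀ k, IsPreconnected (B k)) (hBne : ∀ k, (B k).Nonempty)
    (hBd : Pairwise (Disjoint on B)) (hAB : ⋃ i, A i = ⋃ k, B k) : Nat.card ι = Nat.card κ := by
  obtain ⟨f, hf⟩ := exists_forall_subset_of_iUnion_subset_iUnion hA hAne hBc hBd hAB.le
  obtain ⟨g, hg⟩ := exists_forall_subset_of_iUnion_subset_iUnion hB hBne hAc hAd hAB.ge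
  have hgf : LeftInverse g f := fun i => by
    by_contra hne
    obtain ⟨x, hx⟩ := hAne i
    exact disjoint_left.1 (hAd hne) (hg _ (hf _ hx)) hx
  have hfg : LeftInverse f g := fun k => by
    by_contra hne
    obtain ⟨x, hx⟩ := hBne k
    exact disjoint_left.1 (hBd hne) (hf _ (hg _ hx)) hx
  exact Nat.card_congr ⟨f, g, hgf, hfg⟩

theorem eq_zero_of_iUnion_isArc {k : ℕ} {A : Fin k → Set ℂ} (hA : ∀ j, IsArc (A j))
    (hAd : Pairwise (Disjoint on A)) (h : ⋃ j, A j = ∅ ∨ ⋃ j, A j = unitCircleSet) : k = 0 := by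
  by_contra hk
  rcases h with hempty | hcircle
  · obtain ⟨x, hx⟩ := (hA ⟨0, Nat.pos_of_ne_zero hk⟩).2.2.2.2
    exact (hempty ▸ mem_iUnion_of_mem _ hx : x ∈ (∅ : Set ℂ))
  · have hT : IsConnected unitCircleSet := by
      convert isConnected_sphere (E := ℂ) (by simp) 0 zero_le_one
      ext z; simp [unitCircleSet]
    obtain ⟨i, hi⟩ := hT.isPreconnected.exists_subset_of_subset_iUnion hT.nonempty
      (fun i => (hA i).2.1) hAd hcircle.ge
    exact (hA i).2.2.2.1 ((hA i).1.antisymm hi)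

theorem IsDisjointUnionOfArcs.unique {n m : ℕ} {E : Set ℂ} (hn : IsDisjointUnionOfArcs n E)
    (hm : IsDisjointUnionOfArcs m E) : n = m := by
  rcases hn with ⟨rfl, hE⟩ | ⟨A, hA, hAd, rfl⟩ <;> rcases hm with ⟨rfl, hE'⟩ | ⟨B, hB, hBd, hEB⟩
  · rfl
  · exact (eq_zero_of_iUnion_isArc hB hBd (hEB ▸ hE)).symm
  · exact eq_zero_of_iUnion_isArc hA hAd hE'
  · simpa using Nat.card_eq_of_iUnion_eq_iUnion (fun j => (hA j).2.1)
      (fun j => (hA j).2.2.1.isPreconnected) (fun j => (hA j).2.2.2.2) hAd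
      (fun k => (hB k).2.1) (fun k => (hB k).2.2.1.isPreconnected) (fun k => (hB k).2.2.2.2) hBd
      hEB

theorem Real.sin_nonneg_iff_exists_int {x : ℝ} :
    0 ≤ sin x ↔ ∃ k : ℤ, x ∈ Icc (2 * π * k) (2 * π * k + π) := by
  constructor
  · intro hx
    set k := ⌊x / (2 * π)⌋
    have hk : (k : ℝ) * (2 * π) ≤ x := (le_div_iff₀ two_pi_pos).1 (Int.floor_le _)
    have hk' : x < (k + 1) * (2 * π) := (div_lt_iff₀ two_pi_pos).1 (Int.lt_floor_add_one _)
    refine ⟨k, by linarith, not_lt.1 fun hπ => ?_⟩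
    -- on `(π, 2π)` the sine is negative
    have := sin_pos_of_pos_of_lt_pi (x := x - k * (2 * π) - π) (by linarith) (by linarith)
    rw [sin_sub_pi, sin_sub_int_mul_two_pi] at this
    linarith
  · rintro ⟨k, hk, hk'⟩
    rw [← sin_sub_int_mul_two_pi x k]
    exact sin_nonneg_of_nonneg_of_le_pi (by linarith) (by linarith)

theorem Real.sin_nonneg_iff_exists_fin {n : ℕ} {x : ℝ} (hx : x ∈ Ico 0 (2 * π * n)) :
    0 ≤ sin x ↔ ∃ j : Fin n, x ∈ Icc (2 * π * j) (2 * π * j + π) := by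
  refine ⟨fun h => ?_, fun ⟨j, hj⟩ => sin_nonneg_iff_exists_int.2 ⟨j, by exact_mod_cast hj⟩⟩
  obtain ⟨k, hk⟩ := sin_nonneg_iff_exists_int.1 h
  have hk0 : 0 ≤ k := by
    by_contra! hk0
    have : (k : ℝ) ≤ -1 := by exact_mod_cast Int.le_sub_one_of_lt hk0
    nlinarith [hx.1, hk.2, pi_pos]
  have hkn : (k : ℝ) < n := by nlinarith [hx.2, hk.1, pi_pos]
  lift k to ℕ using hk0
  exact ⟨⟨k, by exact_mod_cast hkn⟩, by exact_mod_cast hk⟩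

theorem exists_mem_Ico_coe_circleExp_eq {z : ℂ} (hz : ‖z‖ = 1) (a : ℝ) :
    ∃ θ ∈ Ico a (a + 2 * π), (Circle.exp θ : ℂ) = z := by
  obtain ⟨θ, hθ, hθz⟩ := Circle.periodic_exp.exists_mem_Ico two_pi_pos (arg z) a
  refine ⟨θ, hθ, ?_⟩
  simpa [← hθz, hz] using norm_mul_exp_arg_mul_I z

theorem continuous_coe_circleExp : Continuous fun θ : ℝ => (Circle.exp θ : ℂ) :=
  continuous_subtype_val.comp Circle.exp.continuous

theorem isArc_image_Icc {a b : ℝ} (hab : a ≤ b) (hba : b < a + 2 * π) :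
    IsArc ((fun θ : ℝ => (Circle.exp θ : ℂ)) '' Icc a b) := by
  refine ⟨?_, (isCompact_Icc.image continuous_coe_circleExp).isClosed,
    (isConnected_Icc hab).image _ continuous_coe_circleExp.continuousOn, fun hT => ?_,
    (nonempty_Icc.2 hab).image _⟩
  · rintro _ ⟨θ, -, rfl⟩
    exact Circle.norm_coe _
  · -- the midpoint of the complementary interval `(b, a + 2π)` is missed
    obtain ⟨θ, hθ, hθm⟩ :=
      (hT.ge (Circle.norm_coe (Circle.exp ((b + a + 2 * π) / 2))) : _ ∈ _ '' _)
    have := Circle.exp_injOn_Ico (le_of_eq (add_sub_cancel_left a (2 * π)))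
      ⟨hθ.1, by linarith [hθ.2]⟩ ⟨by linarith [hθ.2], by linarith⟩ (Subtype.ext hθm)
    linarith [hθ.2]

theorem OrderIso.symm_apply_add_of_apply_add {e : ℝ ≃o ℝ} {p q : ℝ}
    (h : ∀ x, e (x + p) = e x + q) (y : ℝ) : e.symm (y + q) = e.symm y + p :=
  e.symm_apply_eq.2 (by rw [h, e.apply_symm_apply])

theorem isDisjointUnionOfArcs_of_lift {f : ℂ → ℂ} {n : ℕ} (ψ : ℝ ≃o ℝ)
    (hψ : ∀ θ, ψ (θ + 2 * π) = ψ θ + 2 * π * n)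
    (hf : ∀ θ : ℝ, f (Circle.exp θ) = Circle.exp (ψ θ)) :
    IsDisjointUnionOfArcs n {z | ‖z‖ = 1 ∧ 0 ≤ (f z).im} := by
  set σ : ℝ → ℝ := fun t => ψ.symm (2 * π * t)
  set τ : ℝ → ℝ := fun t => ψ.symm (2 * π * t + π)
  have hmem (t θ : ℝ) : θ ∈ Icc (σ t) (τ t) ↔ ψ θ ∈ Icc (2 * π * t) (2 * π * t + π) := by
    rw [← mem_preimage, ψ.preimage_Icc]
  have hστ (t : ℝ) : σ t ≤ τ t := ψ.symm.monotone (by linarith [pi_pos])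
  have hτσ (t : ℝ) : τ t < σ (t + 1) := ψ.symm.strictMono (by linarith [pi_pos])
  have hσ : Monotone σ := fun s t hst => ψ.symm.monotone (by nlinarith [pi_pos])
  have hσn : σ n = σ 0 + 2 * π := by
    simpa [σ] using ψ.symm_apply_add_of_apply_add hψ 0
  have hwindow (j : Fin n) : Icc (σ j) (τ j) ⊆ Ico (σ 0) (σ 0 + 2 * π) := by
    have h0 : σ 0 ≤ σ j := hσ (Nat.cast_nonneg _)
    have h1 : σ (j + 1) ≤ σ n := hσ (by exact_mod_cast j.isLt)
    exact fun θ hθ => ⟨h0.trans hθ.1, by linarith [hθ.2, hτσ j]⟩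
  have hIm (θ : ℝ) : (f (Circle.exp θ)).im = Real.sin (ψ θ) := by
    rw [hf, Circle.coe_exp, exp_ofReal_mul_I_im]
  refine Or.inr ⟨fun j => (fun θ : ℝ => (Circle.exp θ : ℂ)) '' Icc (σ j) (τ j),
    fun j => isArc_image_Icc (hστ j) ?_, ?_, ?_⟩
  · linarith [(hwindow j ⟨hστ j, le_rfl⟩).2, hσ (Nat.cast_nonneg (j : ℕ) : (0 : ℝ) ≤ j)]
  · refine (pairwise_disjoint_on _).2 fun j k hjk => ?_
    have hjk' : (j : ℝ) + 1 ≤ k := by exact_mod_cast hjk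
    have hIcc : Disjoint (Icc (σ j) (τ j)) (Icc (σ k) (τ k)) :=
      disjoint_left.2 fun θ hj hk => by linarith [hj.2, hk.1, hτσ j, hσ hjk']
    exact hIcc.image (Subtype.val_injective.comp_injOn (Circle.exp_injOn_Ico (by linarith)))
      (hwindow j) (hwindow k)
  · ext z
    simp only [mem_ofPred_eq, mem_iUnion, mem_image]
    constructor
    · rintro ⟨hz, him⟩
      obtain ⟨θ, hθ, rfl⟩ := exists_mem_Ico_coe_circleExp_eq hz (σ 0)
      have hψθ : ψ θ ∈ Ico 0 (2 * π * n) :=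
        ⟨by simpa [σ] using ψ.symm_apply_le.1 hθ.1, ψ.lt_symm_apply.1 (hσn.symm ▸ hθ.2 :)⟩
      obtain ⟨j, hj⟩ := (Real.sin_nonneg_iff_exists_fin hψθ).1 (hIm θ ▸ him)
      exact ⟨j, θ, (hmem j θ).2 hj, rfl⟩
    · rintro ⟨j, θ, hθ, rfl⟩
      refine ⟨Circle.norm_coe _, hIm θ ▸ Real.sin_nonneg_iff_exists_int.2 ⟨j, ?_⟩⟩
      exact_mod_cast (hmem j θ).1 hθ

theorem Complex.conj_div_self {w : ℂ} (hw : w ≠ 0) : conj w / w = cexp (↑(-2 * arg w) * I) := by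
  have hnorm : (‖w‖ : ℂ) ≠ 0 := ofReal_ne_zero.2 (norm_ne_zero_iff.2 hw)
  conv_lhs => rw [← norm_mul_exp_arg_mul_I w]
  rw [map_mul, conj_ofReal, ← exp_conj, mul_div_mul_left _ _ hnorm, ← exp_sub]
  congr 1
  simp only [map_mul, conj_ofReal, conj_I]
  push_cast
  ring

theorem sub_eq_mul_conj_one_sub_conj_mul {a z : ℂ} (hz : ‖z‖ = 1) :
    z - a = z * conj (1 - conj a * z) := by
  have hzz : z * conj z = 1 := by rw [mul_conj, normSq_eq_norm_sq, hz]; simp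
  rw [map_sub, map_one, map_mul, conj_conj]
  linear_combination a * hzz

theorem re_one_add_div_one_sub_pos {u : ℂ} (hu : ‖u‖ < 1) : 0 < ((1 + u) / (1 - u)).re := by
  have hnormSq : normSq u < 1 := by
    rw [normSq_eq_norm_sq]; nlinarith [norm_nonneg u]
  have hne : 1 - u ≠ 0 := fun h => by rw [← sub_eq_zero.1 h] at hu; simp at hu
  rw [div_re, ← add_div]
  refine div_pos ?_ (normSq_pos.2 hne)
  simp only [add_re, sub_re, add_im, sub_im, one_re, one_im]
  rw [normSq_apply] at hnormSq
  nlinarith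

theorem re_one_add_div_one_sub {u : ℂ} (hu : 1 - u ≠ 0) :
    ((1 + u) / (1 - u)).re = 1 - 2 * (-(u * I) / (1 - u)).im := by
  have : (1 + u) / (1 - u) = 1 + 2 * (I * (-(u * I) / (1 - u))) := by
    field_simp
    linear_combination (2 * u) * I_sq
  rw [this]
  simp
  ring

def blaschkeFactorArg (a : ℂ) (θ : ℝ) : ℝ :=
  θ - 2 * arg (1 - conj a * cexp (θ * I))

theorem one_sub_conj_mul_exp_mem_slitPlane {a : ℂ} (ha : ‖a‖ < 1) (θ : ℝ) :
    1 - conj a * cexp (θ * I) ∈ slitPlane := by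
  rw [sub_eq_add_neg]
  exact mem_slitPlane_of_norm_lt_one (by simpa using ha)

theorem blaschkeFactor_exp_eq {a : ℂ} (ha : ‖a‖ < 1) (θ : ℝ) :
    (cexp (θ * I) - a) / (1 - conj a * cexp (θ * I)) = cexp (blaschkeFactorArg a θ * I) := by
  rw [sub_eq_mul_conj_one_sub_conj_mul (norm_exp_ofReal_mul_I θ), mul_div_assoc,
    conj_div_self (slitPlane_ne_zero (one_sub_conj_mul_exp_mem_slitPlane ha θ)),
    ← Complex.exp_add, blaschkeFactorArg]
  push_cast
  ring_nf

theorem blaschkeFactorArg_add_two_pi (a : ℂ) (θ : ℝ) :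
    blaschkeFactorArg a (θ + 2 * π) = blaschkeFactorArg a θ + 2 * π := by
  have : cexp (↑(θ + 2 * π) * I) = cexp (θ * I) := by
    rw [ofReal_add, add_mul, Complex.exp_add, ofReal_mul, ofReal_ofNat, exp_two_pi_mul_I, mul_one]
  rw [blaschkeFactorArg, blaschkeFactorArg, this]
  ring

theorem abs_blaschkeFactorArg_sub_le (a : ℂ) (θ : ℝ) : |blaschkeFactorArg a θ - θ| ≤ 2 * π := by
  rw [blaschkeFactorArg, sub_sub_cancel_left, abs_neg, abs_mul, abs_two]
  linarith [abs_arg_le_pi (1 - conj a * cexp (θ * I))]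

theorem hasDerivAt_blaschkeFactorArg {a : ℂ} (ha : ‖a‖ < 1) (θ : ℝ) :
    HasDerivAt (blaschkeFactorArg a)
      ((1 + conj a * cexp (θ * I)) / (1 - conj a * cexp (θ * I))).re θ := by
  have hw := one_sub_conj_mul_exp_mem_slitPlane ha θ
  have hexp : HasDerivAt (fun t : ℝ => cexp (t * I)) (cexp (θ * I) * (1 * I)) θ :=
    ((hasDerivAt_id θ).ofReal_comp.mul_const I).cexp
  have hlog := ((hexp.const_mul (conj a)).const_sub 1).clog_real hw
  have harg := imCLM.hasFDerivAt.comp_hasDerivAt θ hlog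
  simp only [comp_def, imCLM_apply, log_im, one_mul, ← mul_assoc] at harg
  refine ((hasDerivAt_id' θ).sub (harg.const_mul 2)).congr_deriv ?_
  exact (re_one_add_div_one_sub (slitPlane_ne_zero hw)).symm

theorem strictMono_blaschkeFactorArg {a : ℂ} (ha : ‖a‖ < 1) : StrictMono (blaschkeFactorArg a) :=
  strictMono_of_deriv_pos fun θ => (hasDerivAt_blaschkeFactorArg ha θ).deriv ▸
    re_one_add_div_one_sub_pos (by simpa using ha)

theorem continuous_blaschkeFactorArg {a : ℂ} (ha : ‖a‖ < 1) : Continuous (blaschkeFactorArg a) :=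
  continuous_iff_continuousAt.2 fun θ => (hasDerivAt_blaschkeFactorArg ha θ).continuousAt

def blaschkeArg (lam : ℂ) {n : ℕ} (a : Fin n → ℂ) (θ : ℝ) : ℝ :=
  arg lam + ∑ j, blaschkeFactorArg (a j) θ

theorem blaschke_exp_eq {n : ℕ} {lam : ℂ} {a : Fin n → ℂ} (hlam : ‖lam‖ = 1)
    (ha : ∀ j, ‖a j‖ < 1) (θ : ℝ) :
    lam * ∏ j, (cexp (θ * I) - a j) / (1 - conj (a j) * cexp (θ * I)) =
      cexp (blaschkeArg lam a θ * I) := by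
  conv_lhs => rw [← norm_mul_exp_arg_mul_I lam, hlam]
  simp only [blaschkeFactor_exp_eq (ha _), ← Complex.exp_sum, ofReal_one, one_mul,
    ← Complex.exp_add, blaschkeArg, ← Finset.sum_mul]
  push_cast
  ring_nf

theorem blaschkeArg_add_two_pi {n : ℕ} (lam : ℂ) (a : Fin n → ℂ) (θ : ℝ) :
    blaschkeArg lam a (θ + 2 * π) = blaschkeArg lam a θ + 2 * π * n := by
  simp only [blaschkeArg, blaschkeFactorArg_add_two_pi, Finset.sum_add_distrib,
    Finset.sum_const, Finset.card_univ, Fintype.card_fin, nsmul_eq_mul]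
  ring

theorem strictMono_blaschkeArg {n : ℕ} (hn : 0 < n) (lam : ℂ) {a : Fin n → ℂ}
    (ha : ∀ j, ‖a j‖ < 1) : StrictMono (blaschkeArg lam a) := fun _ _ h =>
  (add_lt_add_iff_left _).2 (Finset.sum_lt_sum_of_nonempty ⟨⟨0, hn⟩, Finset.mem_univ _⟩
    fun j _ => strictMono_blaschkeFactorArg (ha j) h)

theorem continuous_blaschkeArg {n : ℕ} (lam : ℂ) {a : Fin n → ℂ} (ha : ∀ j, ‖a j‖ < 1) :
    Continuous (blaschkeArg lam a) :=
  continuous_const.add (continuous_finsetSum _ fun j _ => continuous_blaschkeFactorArg (ha j))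

theorem abs_blaschkeArg_sub_le {n : ℕ} (lam : ℂ) (a : Fin n → ℂ) (θ : ℝ) :
    |blaschkeArg lam a θ - (arg lam + n * θ)| ≤ 2 * π * n := by
  have : blaschkeArg lam a θ - (arg lam + n * θ) = ∑ j, (blaschkeFactorArg (a j) θ - θ) := by
    simp [blaschkeArg, Finset.sum_sub_distrib]
  rw [this]
  refine (Finset.abs_sum_le_sum_abs _ _).trans ?_
  simpa [mul_comm] using Finset.sum_le_sum fun j (_ : j ∈ Finset.univ) =>
    abs_blaschkeFactorArg_sub_le (a j) θ

theorem surjective_blaschkeArg {n : ℕ} (hn : 0 < n) (lam : ℂ) {a : Fin n → ℂ}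
    (ha : ∀ j, ‖a j‖ < 1) : Surjective (blaschkeArg lam a) := by
  have hlin (c : ℝ) : Tendsto (fun θ : ℝ => arg lam + n * θ + c) atTop atTop ∧
      Tendsto (fun θ : ℝ => arg lam + n * θ + c) atBot atBot := by
    have hn' : (0 : ℝ) < n := Nat.cast_pos.2 hn
    exact ⟨tendsto_atTop_add_const_right _ _ (tendsto_atTop_add_const_left _ _
        (tendsto_id.const_mul_atTop hn')),
      tendsto_atBot_add_const_right _ _ (tendsto_atBot_add_const_left _ _
        (tendsto_id.const_mul_atBot hn'))⟩
  have hbound := fun θ => abs_le.1 (abs_blaschkeArg_sub_le lam a θ)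
  refine (continuous_blaschkeArg lam ha).surjective ?_ ?_
  · exact tendsto_atTop_mono (fun θ => by linarith [hbound θ]) (hlin (-(2 * π * n))).1
  · exact tendsto_atBot_mono (fun θ => by linarith [hbound θ]) (hlin (2 * π * n)).2

theorem IsBlaschke.isDisjointUnionOfArcs {n : ℕ} {b : ℂ → ℂ} (h : IsBlaschke n b) :
    IsDisjointUnionOfArcs n {z | ‖z‖ = 1 ∧ 0 ≤ (b z).im} := by
  obtain ⟨lam, a, hlam, ha, hb⟩ := h
  rcases Nat.eq_zero_or_pos n with rfl | hn
  · have hconst (z : ℂ) (hz : ‖z‖ = 1) : b z = lam := by simpa using hb z hz.le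
    refine Or.inl ⟨rfl, ?_⟩
    by_cases him : 0 ≤ lam.im
    · exact Or.inr (Set.ext fun z => ⟨And.left, fun hz => ⟨hz, hconst z hz ▸ him⟩⟩)
    · exact Or.inl (Set.eq_empty_of_forall_notMem fun z hz => him (hconst z hz.1 ▸ hz.2))
  · refine isDisjointUnionOfArcs_of_lift ((strictMono_blaschkeArg hn lam ha).orderIsoOfSurjective
      _ (surjective_blaschkeArg hn lam ha)) (blaschkeArg_add_two_pi lam a) fun θ => ?_
    rw [hb _ (Circle.norm_coe _).le, Circle.coe_exp, blaschke_exp_eq hlam ha]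
    rfl

/-- A finite Blaschke product `b` has order `n` if and only if
`U_b = {z ∈ 𝕋 : Im b(z) ≥ 0}` is a disjoint union of exactly `n` arcs. -/
theorem blaschke_order_iff_Ub (b : ℂ → ℂ) (hb : ∃ m, IsBlaschke m b) (n : ℕ) :
    IsBlaschke n b ↔
      IsDisjointUnionOfArcs n {z : ℂ | ‖z‖ = 1 ∧ 0 ≤ (b z).im} := by
  obtain ⟨m, hm⟩ := hb
  refine ⟨IsBlaschke.isDisjointUnionOfArcs, fun h => ?_⟩
  rwa [h.unique hm.isDisjointUnionOfArcs]
end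
end
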